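/- arXiv:2205.09992 — 2 statements merged into one kernel-verified Lean document; each statement's English description precedes it below -/
import Mathlib

section
/- Let n, t, d, c be natural numbers with n > 3t + 2d and n − t ≤ c. Let K be a nonempty finite set and R a binary relation on K such that for every a ∈ K the set {b ∈ K | R a b} has at least c − d elements. Then there exists b ∈ K such that the set {a ∈ K | R a b} has strictly more than ⌊(n+t)/2⌋ elements. -/
theorem pigeonhole_quorum {α : Type*} [DecidableEq α]
    (n t d c : ℕ) (hn : n > 3 * t + 2 * d) (hc : n - t ≤ c)
    (K : Finset α) (hK : K.Nonempty)
    (R : α → α → Prop) [DecidableRel R]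
    (h : ∀ a ∈ K, c - d ≤ (K.filter (fun b => R a b)).card) :
    ∃ b ∈ K, (K.filter (fun a => R a b)).card > (n + t) / 2 := by
  by_contra hcon
  push_neg at hcon
  have hsum : ∑ a ∈ K, (K.filter (fun b => R a b)).card
      = ∑ b ∈ K, (K.filter (fun a => R a b)).card := by
    simp only [Finset.card_filter]
    exact Finset.sum_comm
  have h1 : K.card * (c - d) ≤ ∑ a ∈ K, (K.filter (fun b => R a b)).card := by
    rw [← Finset.sum_const_nat (fun a ha => rfl) (m := c - d)]
    · exact Finset.sum_le_sum h
  have h2 : ∑ b ∈ K, (K.filter (fun a => R a b)).card ≤ K.card * ((n + t) / 2) := by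
    calc ∑ b ∈ K, (K.filter (fun a => R a b)).card
        ≤ ∑ _b ∈ K, (n + t) / 2 := Finset.sum_le_sum hcon
      _ = K.card * ((n + t) / 2) := by rw [Finset.sum_const, smul_eq_mul]
  have hle : c - d ≤ (n + t) / 2 := by
    have := h1.trans (hsum ▸ h2)
    exact Nat.le_of_mul_le_mul_left this (Finset.card_pos.mpr hK)
  omega
end

section
/- Let n, t, c, d, k, ℓ be integers with n ≥ 0, t ≥ 0, d ≥ 0, and set q = ⌊(n+t)/2⌋ (integer floor division). Assume q < c − d, c − d ≤ k, and ℓ·k + (c − ℓ)·q ≥ k·(c − d). Then ℓ ≥ c − d − ⌊(q·d)/(c − d − q)⌋ (floor division). -/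
theorem two_step_lower_bound (n t c d k ℓ q : ℤ)
    (hn : n ≥ 0) (ht : t ≥ 0) (hd : d ≥ 0)
    (hq : q = (n + t) / 2)
    (h1 : q < c - d) (h2 : c - d ≤ k)
    (h3 : ℓ * k + (c - ℓ) * q ≥ k * (c - d)) :
    ℓ ≥ c - d - (q * d) / (c - d - q) := by
  have hq0 : 0 ≤ q := by omega
  have hmpos : 0 < c - d - q := by omega
  have key : (c - d - ℓ) * (k - q) ≤ q * d := by nlinarith
  have hdiv : c - d - ℓ ≤ q * d / (c - d - q) := by
    rcases le_or_gt (c - d - ℓ) 0 with h | h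
    · exact h.trans (Int.ediv_nonneg (by positivity) hmpos.le)
    · rw [Int.le_ediv_iff_mul_le hmpos]
      nlinarith
  omega
end
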